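/- arXiv:2009.01688 — 2 statements merged into one kernel-verified Lean document; each statement's English description precedes it below -/
import Mathlib

section
/- The function g(x) := ((sin x)/x − (2 + cos x)/3)/(sin x − x·cos x), equivalently g(x) = (3·sin x − x·cos x − 2x)/(3x·sin x − 3x²·cos x), is strictly decreasing on the open interval (0, π/2). -/
/-!
Writing `D = sin x - x cos x > 0`, the derivative of `g` is
`(2/3 x² sin x (x - sin x) - D²) / (x² D²)`, so it suffices that `D² > 2/3 x² sin x (x - sin x)`
on `(0, π/2)`. Both sides are `x⁶/9 + O(x⁸)`, so this needs the alternating Taylor bounds for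
`sin` and `cos` up to order eight; after eliminating `cos² x = 1 - sin² x`, the difference is
bounded below by `x⁸` times a polynomial that stays positive for `x < π/2`.
-/

open Real Set Finset Nat

noncomputable def sinTaylor (n : ℕ) (x : ℝ) : ℝ :=
  ∑ k ∈ range n, (-1) ^ k * x ^ (2 * k + 1) / (2 * k + 1)!

noncomputable def cosTaylor (n : ℕ) (x : ℝ) : ℝ :=
  ∑ k ∈ range n, (-1) ^ k * x ^ (2 * k) / (2 * k)!

theorem hasDerivAt_sinTaylor (n : ℕ) (x : ℝ) : HasDerivAt (sinTaylor n) (cosTaylor n x) x := by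
  unfold sinTaylor cosTaylor
  refine HasDerivAt.fun_sum fun k _ => ?_
  refine (((hasDerivAt_pow (2 * k + 1) x).const_mul ((-1 : ℝ) ^ k)).div_const
    ((2 * k + 1)! : ℝ)).congr_deriv ?_
  rw [factorial_succ]
  push_cast
  field_simp

theorem hasDerivAt_cosTaylor_succ (n : ℕ) (x : ℝ) :
    HasDerivAt (cosTaylor (n + 1)) (-sinTaylor n x) x := by
  have hshift : cosTaylor (n + 1) =
      fun y => ∑ k ∈ range n, (-1 : ℝ) ^ (k + 1) * y ^ (2 * k + 2) / (2 * k + 2)! + 1 := by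
    ext y
    simp [cosTaylor, sum_range_succ', mul_add]
  rw [hshift, sinTaylor, ← sum_neg_distrib]
  refine (HasDerivAt.fun_sum fun k _ => ?_).add_const 1
  refine (((hasDerivAt_pow (2 * k + 2) x).const_mul ((-1 : ℝ) ^ (k + 1))).div_const
    ((2 * k + 2)! : ℝ)).congr_deriv ?_
  rw [factorial_succ (2 * k + 1)]
  push_cast
  field_simp
  ring

theorem nonneg_of_hasDerivAt_nonneg {f f' : ℝ → ℝ} (hf : ∀ t, HasDerivAt f (f' t) t)
    (hf' : ∀ t, 0 ≤ t → 0 ≤ f' t) (h0 : f 0 = 0) {x : ℝ} (hx : 0 ≤ x) : 0 ≤ f x := by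
  have hmono : MonotoneOn f (Ici 0) :=
    monotoneOn_of_hasDerivWithinAt_nonneg (convex_Ici 0)
      (fun t _ => (hf t).continuousAt.continuousWithinAt) (fun t _ => (hf t).hasDerivWithinAt)
      (fun t ht => hf' t (interior_subset ht))
  simpa [h0] using hmono self_mem_Ici hx hx

theorem neg_one_pow_mul_sinTaylor_sub_sin_nonneg_of_cosTaylor {n : ℕ}
    (hcos : ∀ t, 0 ≤ t → 0 ≤ (-1) ^ n * (cosTaylor (n + 1) t - cos t)) {x : ℝ} (hx : 0 ≤ x) :
    0 ≤ (-1) ^ n * (sinTaylor (n + 1) x - sin x) :=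
  nonneg_of_hasDerivAt_nonneg
    (fun t => ((hasDerivAt_sinTaylor _ t).sub (hasDerivAt_sin t)).const_mul _) hcos
    (by simp [sinTaylor]) hx

theorem neg_one_pow_mul_cosTaylor_sub_cos_nonneg (n : ℕ) {x : ℝ} (hx : 0 ≤ x) :
    0 ≤ (-1) ^ n * (cosTaylor (n + 1) x - cos x) := by
  induction n generalizing x with
  | zero => simpa [cosTaylor] using cos_le_one x
  | succ n ih =>
    refine nonneg_of_hasDerivAt_nonneg
      (fun t => ((hasDerivAt_cosTaylor_succ _ t).sub (hasDerivAt_cos t)).const_mul _)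
      (fun t ht => ?_) (by simp [cosTaylor, sum_range_succ']) hx
    have hsin := neg_one_pow_mul_sinTaylor_sub_sin_nonneg_of_cosTaylor (fun _ hs => ih hs) ht
    linear_combination hsin

theorem neg_one_pow_mul_sinTaylor_sub_sin_nonneg (n : ℕ) {x : ℝ} (hx : 0 ≤ x) :
    0 ≤ (-1) ^ n * (sinTaylor (n + 1) x - sin x) :=
  neg_one_pow_mul_sinTaylor_sub_sin_nonneg_of_cosTaylor
    (fun _ ht => neg_one_pow_mul_cosTaylor_sub_cos_nonneg n ht) hx

theorem sin_sub_mul_cos_pos {x : ℝ} (hx : 0 < x) (hxπ : x < π / 2) : 0 < sin x - x * cos x := by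
  have hcos : 0 < cos x := cos_pos_of_mem_Ioo ⟨by linarith [pi_pos], hxπ⟩
  have htan : x < sin x / cos x := tan_eq_sin_div_cos x ▸ lt_tan hx hxπ
  rw [lt_div_iff₀ hcos] at htan
  linarith

theorem two_div_three_mul_sq_mul_sin_mul_sub_sin_lt {x : ℝ} (hx : 0 < x) (hxπ : x < π / 2) :
    2 / 3 * x ^ 2 * sin x * (x - sin x) < (sin x - x * cos x) ^ 2 := by
  have hx_sq : x ^ 2 < 2.4675 := by nlinarith [pi_lt_d6]
  have hsin_pos : 0 < sin x := sin_pos_of_pos_of_lt_pi hx (by linarith [pi_pos])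
  have hsin_le : sin x ≤ x - x^3/6 + x^5/120 := by
    have := neg_one_pow_mul_sinTaylor_sub_sin_nonneg 2 hx.le
    norm_num [sinTaylor, sum_range_succ, factorial] at this
    linarith
  have hsin_ge : x - x^3/6 + x^5/120 - x^7/5040 ≤ sin x := by
    have := neg_one_pow_mul_sinTaylor_sub_sin_nonneg 3 hx.le
    norm_num [sinTaylor, sum_range_succ, factorial] at this
    linarith
  have hcos_le : cos x ≤ 1 - x^2/2 + x^4/24 - x^6/720 + x^8/40320 := by
    have := neg_one_pow_mul_cosTaylor_sub_cos_nonneg 4 hx.le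
    norm_num [cosTaylor, sum_range_succ, factorial] at this
    linarith
  have hsin_ge_pos : 0 < x - x^3/6 + x^5/120 - x^7/5040 := by
    have : 0 < 1 - x^2/6 + x^4/120 - x^6/5040 := by nlinarith [sq_nonneg (x ^ 2)]
    nlinarith
  have hW : 0 < 11/7560 - x^2/75600 - 31*x^4/1814400 + 37*x^6/50803200 - x^8/76204800 := by
    nlinarith [sq_nonneg (x ^ 2), pow_pos hx 6]
  rw [← sub_pos]
  calc 0 < x^8 * (11/7560 - x^2/75600 - 31*x^4/1814400 + 37*x^6/50803200 - x^8/76204800) := by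
        positivity
    _ = (1 - x^2/3) * (x - x^3/6 + x^5/120 - x^7/5040) ^ 2
          - (x - x^3/6 + x^5/120) * (2 * x * (1 - x^2/2 + x^4/24 - x^6/720 + x^8/40320) + 2/3 * x^3)
          + x^2 := by ring
    _ ≤ (1 - x^2/3) * sin x ^ 2
          - sin x * (2 * x * (1 - x^2/2 + x^4/24 - x^6/720 + x^8/40320) + 2/3 * x^3) + x^2 := by
        gcongr
        · linarith
        · nlinarith
    _ ≤ (1 - x^2/3) * sin x ^ 2 - sin x * (2 * x * cos x + 2/3 * x^3) + x^2 := by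
        gcongr
    _ = (sin x - x * cos x) ^ 2 - 2 / 3 * x ^ 2 * sin x * (x - sin x) := by
        linear_combination (-x^2) * sin_sq_add_cos_sq x

theorem hasDerivAt_g {x : ℝ} (hx : x ≠ 0) (hD : sin x - x * cos x ≠ 0) :
    HasDerivAt (fun x : ℝ => (sin x / x - (2 + cos x) / 3) / (sin x - x * cos x))
      ((2 / 3 * x ^ 2 * sin x * (x - sin x) - (sin x - x * cos x) ^ 2) /
        (x ^ 2 * (sin x - x * cos x) ^ 2)) x := by
  have hnum := ((hasDerivAt_sin x).fun_div (hasDerivAt_id' x) hx).fun_sub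
    (((hasDerivAt_cos x).const_add 2).div_const 3)
  have hden := (hasDerivAt_sin x).fun_sub ((hasDerivAt_id' x).fun_mul (hasDerivAt_cos x))
  refine (hnum.fun_div hden hD).congr_deriv ?_
  field_simp
  ring

theorem g_strictAntiOn :
    StrictAntiOn (fun x : ℝ => (sin x / x - (2 + cos x) / 3) / (sin x - x * cos x)) (Ioo 0 (π / 2)) := by
  have hderiv {x : ℝ} (hx : x ∈ Ioo 0 (π / 2)) :=
    hasDerivAt_g hx.1.ne' (sin_sub_mul_cos_pos hx.1 hx.2).ne'
  refine strictAntiOn_of_deriv_neg (convex_Ioo 0 (π / 2))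
    (fun x hx => (hderiv hx).continuousAt.continuousWithinAt) fun x hx => ?_
  rw [interior_Ioo] at hx
  rw [(hderiv hx).deriv]
  obtain ⟨hx0, hxπ⟩ := hx
  have hD := sin_sub_mul_cos_pos hx0 hxπ
  exact div_neg_of_neg_of_pos (sub_neg.2 (two_div_three_mul_sq_mul_sin_mul_sub_sin_lt hx0 hxπ))
    (by positivity)
end

section
/- For all real x with 0 < x < π/2, one has f₄(x) < 0, where f₄(x) := −4x²(π − 3)·sin x·cos x + 3π·sin x + 2x(x² − 1)(π − 3)·cos² x − πx·cos x − 6x. -/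
/-!
Up to the identity `sin² x + cos² x = 1`, `f₄(x) = -refinedCusaGap x`. For `x ≤ 6/5` the Taylor
bounds `cos x ≥ 1 - x²/2 + x⁴/24 - x⁶/720`, `sin x ≤ x - x³/6 + x⁵/120` and
`0 ≤ sin x - x cos x ≤ x³/3` bound the gap below by `x⁵ (π/60 - x² (π/720 + 2(π - 3)/9)) > 0`.
Near `π/2` this fails because the gap vanishes at `π/2`; there we write `x = π/2 - u` and expand in
`u` instead, which bounds the gap below by `u` times an octic in `u` whose coefficients are
polynomials in `π`. Six decimals of `π` bound each coefficient below by an explicit rational, and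
the resulting numerical octic is positive on `[0, 0.3708]`.
-/

open Real Set

theorem le_of_hasDerivAt_le {f g f' g' : ℝ → ℝ} {a x : ℝ} (hf : ∀ t, HasDerivAt f (f' t) t)
    (hg : ∀ t, HasDerivAt g (g' t) t) (ha : f a ≤ g a) (hd : ∀ t, a < t → f' t ≤ g' t)
    (hx : a ≤ x) : f x ≤ g x := by
  have hmono : MonotoneOn (fun t => g t - f t) (Ici a) :=
    monotoneOn_of_hasDerivWithinAt_nonneg (convex_Ici a)
      (fun t _ => ((hg t).sub (hf t)).continuousAt.continuousWithinAt)
      (fun t _ => ((hg t).sub (hf t)).hasDerivWithinAt)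
      (fun t ht => sub_nonneg.2 (hd t (by simpa using ht)))
  linarith [show g a - f a ≤ g x - f x from hmono self_mem_Ici hx hx]

namespace Real

theorem cos_le_one_sub_sq_div_two_add_pow_four_div (x : ℝ) :
    cos x ≤ 1 - x ^ 2 / 2 + x ^ 4 / 24 := by
  have key {y : ℝ} (hy : 0 ≤ y) : cos y ≤ 1 - y ^ 2 / 2 + y ^ 4 / 24 :=
    le_of_hasDerivAt_le (g := fun t => 1 - t ^ 2 / 2 + t ^ 4 / 24) (g' := fun t => -t + t ^ 3 / 6)
      hasDerivAt_cos
      (fun t => (((hasDerivAt_const t 1).sub ((hasDerivAt_pow 2 t).div_const 2)).add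
        ((hasDerivAt_pow 4 t).div_const 24)).congr_deriv (by ring))
      (by norm_num) (fun t ht => by linarith [sin_ge_sub_cube ht.le]) hy
  simpa [cos_abs, Even.pow_abs ⟨1, rfl⟩, Even.pow_abs ⟨2, rfl⟩] using key (abs_nonneg x)

theorem sin_le_sub_cube_add_pow_five {x : ℝ} (hx : 0 ≤ x) :
    sin x ≤ x - x ^ 3 / 6 + x ^ 5 / 120 :=
  le_of_hasDerivAt_le (g := fun t => t - t ^ 3 / 6 + t ^ 5 / 120)
    (g' := fun t => 1 - t ^ 2 / 2 + t ^ 4 / 24) hasDerivAt_sin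
    (fun t => (((hasDerivAt_id t).sub ((hasDerivAt_pow 3 t).div_const 6)).add
      ((hasDerivAt_pow 5 t).div_const 120)).congr_deriv (by ring))
    (by norm_num) (fun t _ => cos_le_one_sub_sq_div_two_add_pow_four_div t) hx

theorem one_sub_sq_div_two_add_pow_four_sub_pow_six_le_cos (x : ℝ) :
    1 - x ^ 2 / 2 + x ^ 4 / 24 - x ^ 6 / 720 ≤ cos x := by
  have key {y : ℝ} (hy : 0 ≤ y) : 1 - y ^ 2 / 2 + y ^ 4 / 24 - y ^ 6 / 720 ≤ cos y :=
    le_of_hasDerivAt_le (f := fun t => 1 - t ^ 2 / 2 + t ^ 4 / 24 - t ^ 6 / 720)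
      (f' := fun t => -(t - t ^ 3 / 6 + t ^ 5 / 120))
      (fun t => ((((hasDerivAt_const t 1).sub ((hasDerivAt_pow 2 t).div_const 2)).add
        ((hasDerivAt_pow 4 t).div_const 24)).sub
        ((hasDerivAt_pow 6 t).div_const 720)).congr_deriv (by ring))
      hasDerivAt_cos (by norm_num) (fun t ht => neg_le_neg (sin_le_sub_cube_add_pow_five ht.le))
      hy
  simpa [cos_abs, Even.pow_abs ⟨1, rfl⟩, Even.pow_abs ⟨2, rfl⟩, Even.pow_abs ⟨3, rfl⟩]
    using key (abs_nonneg x)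

theorem mul_cos_le_sin {x : ℝ} (hx : 0 ≤ x) (hx' : x < π / 2) : x * cos x ≤ sin x := by
  have hcos : 0 < cos x := cos_pos_of_mem_Ioo ⟨by linarith [pi_pos], hx'⟩
  have := le_tan hx hx'
  rwa [tan_eq_sin_div_cos, le_div_iff₀ hcos] at this

theorem sin_sub_mul_cos_le {x : ℝ} (hx : 0 ≤ x) : sin x - x * cos x ≤ x ^ 3 / 3 :=
  le_of_hasDerivAt_le (f := fun t => sin t - t * cos t) (f' := fun t => t * sin t)
    (g := fun t => t ^ 3 / 3) (g' := fun t => t ^ 2)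
    (fun t => ((hasDerivAt_sin t).sub ((hasDerivAt_id' t).mul (hasDerivAt_cos t))).congr_deriv
      (by ring))
    (fun t => ((hasDerivAt_pow 3 t).div_const 3).congr_deriv (by ring))
    (by norm_num) (fun t ht => by nlinarith [sin_le ht.le]) hx

end Real

/-- `3πx` times the margin in `sin x / x < (2 + cos x)/3 - (2/3 - 2/π) (sin x - x cos x)²`. -/
noncomputable def refinedCusaGap (x : ℝ) : ℝ :=
  π * x * (2 + cos x) - 3 * π * sin x - 2 * (π - 3) * x * (sin x - x * cos x) ^ 2

theorem refinedCusaGap_pos_of_le {x : ℝ} (hx : 0 < x) (hx' : x ≤ 6 / 5) :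
    0 < refinedCusaGap x := by
  have hbound : 0 < π / 60 - x ^ 2 * (π / 720 + 2 * (π - 3) / 9) := by
    nlinarith [pi_gt_three, pi_lt_d4, pow_le_pow_left₀ hx.le hx' 2]
  calc 0 < x ^ 5 * (π / 60 - x ^ 2 * (π / 720 + 2 * (π - 3) / 9)) :=
        mul_pos (by positivity) hbound
    _ = π * x * (2 + (1 - x ^ 2 / 2 + x ^ 4 / 24 - x ^ 6 / 720))
        - 3 * π * (x - x ^ 3 / 6 + x ^ 5 / 120) - 2 * (π - 3) * x * (x ^ 3 / 3) ^ 2 := by ring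
    _ ≤ refinedCusaGap x := by
      unfold refinedCusaGap
      gcongr
      exacts [one_sub_sq_div_two_add_pow_four_sub_pow_six_le_cos x,
        sin_le_sub_cube_add_pow_five hx.le, mul_nonneg (by linarith [pi_gt_three]) hx.le,
        sub_nonneg.2 (mul_cos_le_sin hx.le (by linarith [pi_gt_three])), sin_sub_mul_cos_le hx.le]

noncomputable def refinedCusaGapTaylor (p u : ℝ) : ℝ :=
  p * (p / 2 - u) * (2 + (u - u ^ 3 / 6)) - 3 * p * (1 - u ^ 2 / 2 + u ^ 4 / 24)
    - 2 * (p - 3) * (p / 2 - u) *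
      (1 - u ^ 2 / 2 + u ^ 4 / 24 - (p / 2 - u) * (u - u ^ 3 / 6)) ^ 2

noncomputable def refinedCusaGapOctic (u : ℝ) : ℝ :=
  0.33224 - 0.86129 * u + 0.62524 * u ^ 2 + 0.20019 * u ^ 3 - 0.52406 * u ^ 4
    + 0.21045 * u ^ 5 + 0.01312 * u ^ 6 - 0.02549 * u ^ 7 + 0.00442 * u ^ 8

theorem refinedCusaGapOctic_pos {u : ℝ} (hu : 0 ≤ u) (hu' : u ≤ 0.3708) :
    0 < refinedCusaGapOctic u := by
  have h3 : 0 ≤ u ^ 3 * (0.3708 - u) := mul_nonneg (pow_nonneg hu 3) (by linarith)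
  have h7 : 0 ≤ u ^ 3 * (0.3708 ^ 4 - u ^ 4) :=
    mul_nonneg (pow_nonneg hu 3) (sub_nonneg.2 (pow_le_pow_left₀ hu hu' 4))
  unfold refinedCusaGapOctic
  linarith only [sq_nonneg (u - 0.6889), h3, h7, hu, pow_nonneg hu 3, pow_nonneg hu 5,
    pow_nonneg hu 6, pow_nonneg hu 8]

/-- `refinedCusaGapTaylor p u = u · Σₖ cₖ(p) uᵏ`; each `cₖ(p)` dominates the `k`-th coefficient
of `refinedCusaGapOctic`. -/
theorem mul_refinedCusaGapOctic_le_taylor {p u : ℝ} (hp : 3.141592 < p) (hp' : p < 3.141593)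
    (hu : 0 ≤ u) : u * refinedCusaGapOctic u ≤ refinedCusaGapTaylor p u := by
  have hp2 : 9.8696002 < p ^ 2 ∧ p ^ 2 < 9.8696066 := ⟨by nlinarith, by nlinarith⟩
  have hp3 : 31.006257 < p ^ 3 ∧ p ^ 3 < 31.0062871 := ⟨by nlinarith, by nlinarith⟩
  have hp4 : 97.4090081 < p ^ 4 ∧ p ^ 4 < 97.4091345 := ⟨by nlinarith, by nlinarith⟩
  have c0 : 0.33224 ≤ -6 - 5/2 * p ^ 2 + p ^ 3 := by linarith
  have c1 : -0.86129 ≤ 19/2 * p - 3 * p ^ 2 + 3/4 * p ^ 3 - 1/4 * p ^ 4 := by linarith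
  have c2 : 0.62524 ≤ -6 + 2 * p - 31/12 * p ^ 2 + 5/6 * p ^ 3 := by linarith
  have c3 : 0.20019 ≤ 49/24 * p - 2/3 * p ^ 2 - 1/4 * p ^ 3 + 1/12 * p ^ 4 := by linarith
  have c4 : -0.52406 ≤ 9/8 * p ^ 2 - 3/8 * p ^ 3 := by linarith
  have c5 : 0.21045 ≤ -13/8 * p + 13/24 * p ^ 2 + 1/48 * p ^ 3 - 1/144 * p ^ 4 := by linarith
  have c6 : 0.01312 ≤ 3/4 - 1/4 * p - 5/48 * p ^ 2 + 5/144 * p ^ 3 := by linarith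
  have c7 : -0.02549 ≤ 11/64 * p - 11/192 * p ^ 2 := by linarith
  have c8 : 0.00442 ≤ -3/32 + 1/32 * p := by linarith
  unfold refinedCusaGapOctic refinedCusaGapTaylor
  have term (k : ℕ) {r c : ℝ} (h : r ≤ c) : 0 ≤ u ^ (k + 1) * (c - r) :=
    mul_nonneg (pow_nonneg hu _) (sub_nonneg.2 h)
  linear_combination term 0 c0 + term 1 c1 + term 2 c2 + term 3 c3 + term 4 c4 + term 5 c5
    + term 6 c6 + term 7 c7 + term 8 c8

theorem refinedCusaGapTaylor_le {u : ℝ} (hu : 0 < u) (hu' : u ≤ π / 2) :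
    refinedCusaGapTaylor π u ≤ refinedCusaGap (π / 2 - u) := by
  have hx : 0 ≤ π / 2 - u := by linarith
  have hbase : 0 ≤ cos u - (π / 2 - u) * sin u := by
    simpa [sin_pi_div_two_sub, cos_pi_div_two_sub] using mul_cos_le_sin hx (by linarith)
  rw [refinedCusaGapTaylor, refinedCusaGap, sin_pi_div_two_sub, cos_pi_div_two_sub]
  gcongr
  exacts [sin_ge_sub_cube hu.le, cos_le_one_sub_sq_div_two_add_pow_four_div u,
    mul_nonneg (by linarith [pi_gt_three]) hx, cos_le_one_sub_sq_div_two_add_pow_four_div u,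
    sin_ge_sub_cube hu.le]

theorem refinedCusaGap_pi_div_two_sub_pos {u : ℝ} (hu : 0 < u) (hu' : u ≤ 0.3708) :
    0 < refinedCusaGap (π / 2 - u) :=
  calc 0 < u * refinedCusaGapOctic u := mul_pos hu (refinedCusaGapOctic_pos hu.le hu')
    _ ≤ refinedCusaGapTaylor π u := mul_refinedCusaGapOctic_le_taylor pi_gt_d6 pi_lt_d6 hu.le
    _ ≤ refinedCusaGap (π / 2 - u) := refinedCusaGapTaylor_le hu (by linarith [pi_gt_three])

theorem f4_neg (x : ℝ) (hx : 0 < x) (hx' : x < π / 2) :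
    -4 * x ^ 2 * (π - 3) * sin x * cos x + 3 * π * sin x +
        2 * x * (x ^ 2 - 1) * (π - 3) * cos x ^ 2 - π * x * cos x - 6 * x < 0 := by
  have hgap : 0 < refinedCusaGap x := by
    rcases le_or_gt x (6 / 5) with hle | hgt
    · exact refinedCusaGap_pos_of_le hx hle
    · simpa using refinedCusaGap_pi_div_two_sub_pos (u := π / 2 - x) (by linarith)
        (by linarith [pi_lt_d4])
  rw [refinedCusaGap] at hgap
  linear_combination hgap - 2 * x * (π - 3) * sin_sq_add_cos_sq x
end
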